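/- arXiv:2411.03110 — 2 statements merged into one kernel-verified Lean document; each statement's English description precedes it below -/
import Mathlib

section
/- Let ψ_{K,B} = Σ_b α_b U_b|ψ_b⟩ be an (unnormalized) MBR state with nonnegative weights α, and let Ψ = (1/‖α‖₁)|0⟩|ψ_{K,B}⟩ + √(1 − ‖ψ_{K,B}‖²/‖α‖₁²)|1⟩|η⟩ be the output of a linear-combination-of-unitaries circuit. Then the success probability satisfies ‖ψ_{K,B}‖²/‖α‖₁² ≤ (‖α‖₂²/‖α‖₁²)(1 − F) + F, where F = max_{a≠b} ‖F_{a,b}‖_∞ and F_{a,b} is the matrix with entries ⟨i|U_a†U_b|j⟩ restricted to the supports S_a × S_b. -/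
open scoped BigOperators
open Matrix

private lemma normsq_re' (z : ℂ) : ((starRingEnd ℂ) z * z).re = ‖z‖^2 := by
  rw [← Complex.normSq_eq_conj_mul_self, Complex.ofReal_re, Complex.normSq_eq_norm_sq]

/-- **LCU success probability for MBR states.** For the MBR state
`ψ_{K,B} = Σ_b α_b U_b |ψ_b⟩` with nonnegative weights `α` and normalized `K`-sparse
components `ψ_b` (supports `S_b`), the success probability of the LCU preparation
satisfies `‖ψ_{K,B}‖²/‖α‖₁² ≤ (‖α‖₂²/‖α‖₁²)(1 − F) + F`, where
`F = max_{a ≠ b} ‖F_{a,b}‖_∞` and `F_{a,b}` is the overlap matrix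
`⟨i|U_a†U_b|j⟩` restricted to `S_a × S_b` (with `‖·‖_∞` the maximal row sum). -/
theorem lcu_success_probability_bound (n K B : ℕ)
    (U : Fin B → Matrix (Fin (2^n)) (Fin (2^n)) ℂ)
    (hU : ∀ b, U b ∈ Matrix.unitaryGroup (Fin (2^n)) ℂ)
    (α : Fin B → ℝ) (hα : ∀ b, 0 ≤ α b)
    (ψb : Fin B → Fin (2^n) → ℂ)
    (S : Fin B → Finset (Fin (2^n))) (hS : ∀ b, (S b).card ≤ K)
    (hsupp : ∀ b, ∀ i ∉ S b, ψb b i = 0)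
    (hnorm : ∀ b, ∑ i, ‖ψb b i‖^2 = 1)
    (hα1 : 0 < ∑ b, α b)
    (Fmax : ℝ)
    (hFmax : Fmax = sSup {x : ℝ | ∃ a b : Fin B, a ≠ b ∧ ∃ i ∈ S a,
      x = ∑ j ∈ S b, ‖((U a)ᴴ * U b) i j‖}) :
    (∑ i, ‖∑ b, (α b : ℂ) • (U b).mulVec (ψb b) i‖^2) / (∑ b, α b)^2 ≤
      ((∑ b, (α b)^2) / (∑ b, α b)^2) * (1 - Fmax) + Fmax := by
  have h2 : (0:ℝ) < (∑ b, α b)^2 := by positivity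
  set v : Fin B → Fin (2^n) → ℂ := fun b => (U b).mulVec (ψb b) with hv
  set G : Fin B → Fin B → ℝ := fun a b => (star (v a) ⬝ᵥ v b).re with hGdef
  -- sums of squared norms on supports are 1
  have hsum1 : ∀ c, ∑ i ∈ S c, ‖ψb c i‖^2 = 1 := by
    intro c
    rw [← hnorm c]
    exact Finset.sum_subset (Finset.subset_univ _) fun i _ hi => by simp [hsupp c i hi]
  -- Step A : expansion of the squared norm
  have hA : (∑ i, ‖∑ b, (α b : ℂ) • v b i‖^2) = ∑ a, ∑ b, α a * α b * G a b := by
    have expand : ∀ i : Fin (2^n),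
        (starRingEnd ℂ) (∑ b, (α b:ℂ) • v b i) * (∑ b, (α b:ℂ) • v b i)
          = ∑ a, ∑ b, ((α a * α b : ℝ) : ℂ) * ((starRingEnd ℂ) (v a i) * v b i) := by
      intro i
      rw [map_sum, Finset.sum_mul_sum]
      refine Finset.sum_congr rfl fun a _ => Finset.sum_congr rfl fun b _ => ?_
      simp only [smul_eq_mul, _root_.map_mul, Complex.conj_ofReal, Complex.ofReal_mul]
      ring
    have step1 : (∑ i, ‖∑ b, (α b : ℂ) • v b i‖^2)
        = ∑ i, ∑ a, ∑ b, (α a * α b) * ((starRingEnd ℂ) (v a i) * v b i).re := by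
      refine Finset.sum_congr rfl fun i _ => ?_
      rw [← normsq_re' _, expand i, Complex.re_sum]
      refine Finset.sum_congr rfl fun a _ => ?_
      rw [Complex.re_sum]
      refine Finset.sum_congr rfl fun b _ => ?_
      rw [Complex.re_ofReal_mul]
    rw [step1, Finset.sum_comm]
    refine Finset.sum_congr rfl fun a _ => ?_
    rw [Finset.sum_comm]
    refine Finset.sum_congr rfl fun b _ => ?_
    rw [← Finset.mul_sum, ← Complex.re_sum]
    congr 1
  -- Step B : diagonal terms
  have hdot : ∀ a b, star (v a) ⬝ᵥ v b = star (ψb a) ⬝ᵥ ((U a)ᴴ * U b).mulVec (ψb b) := by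
    intro a b
    rw [hv]
    simp only []
    rw [Matrix.star_mulVec, ← Matrix.dotProduct_mulVec, Matrix.mulVec_mulVec]
  have hdiag : ∀ b, G b b = 1 := by
    intro b
    rw [hGdef]
    simp only []
    rw [hdot b b]
    have hbb : (U b)ᴴ * U b = 1 := by
      have := (hU b).1
      simpa [Matrix.star_eq_conjTranspose] using this
    rw [hbb, Matrix.one_mulVec]
    have : (star (ψb b) ⬝ᵥ ψb b).re = ∑ i, ‖ψb b i‖^2 := by
      simp only [dotProduct, Pi.star_apply, Complex.re_sum]
      exact Finset.sum_congr rfl fun i _ => normsq_re' _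
    rw [this, hnorm b]
  -- Step C : bounded above & membership bounds for Fmax
  have hbdd : BddAbove {x : ℝ | ∃ a b : Fin B, a ≠ b ∧ ∃ i ∈ S a,
      x = ∑ j ∈ S b, ‖((U a)ᴴ * U b) i j‖} := by
    apply Set.Finite.bddAbove
    apply Set.Finite.subset (Set.finite_range
      (fun p : Fin B × Fin B × Fin (2^n) => ∑ j ∈ S p.2.1, ‖((U p.1)ᴴ * U p.2.1) p.2.2 j‖))
    rintro x ⟨a, b, hab, i, hi, rfl⟩
    exact ⟨(a, b, i), rfl⟩
  have hmem : ∀ (a b : Fin B), a ≠ b → ∀ i ∈ S a,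
      ∑ j ∈ S b, ‖((U a)ᴴ * U b) i j‖ ≤ Fmax := by
    intro a b hab i hi
    rw [hFmax]
    exact le_csSup hbdd ⟨a, b, hab, i, hi, rfl⟩
  -- Step C' : cross terms bounded by Fmax
  have hcross : ∀ a b, a ≠ b → G a b ≤ Fmax := by
    intro a b hab
    set M := (U a)ᴴ * U b with hM
    have hcol : ∀ j ∈ S b, ∑ i ∈ S a, ‖M i j‖ ≤ Fmax := by
      intro j hj
      have h := hmem b a hab.symm j hj
      have e : ∀ i, ‖M i j‖ = ‖((U b)ᴴ * U a) j i‖ := by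
        intro i
        have hMH : (U b)ᴴ * U a = Mᴴ := by
          rw [hM, Matrix.conjTranspose_mul, Matrix.conjTranspose_conjTranspose]
        rw [hMH, Matrix.conjTranspose_apply, norm_star]
      calc ∑ i ∈ S a, ‖M i j‖ = ∑ i ∈ S a, ‖((U b)ᴴ * U a) j i‖ :=
            Finset.sum_congr rfl fun i _ => e i
        _ ≤ Fmax := h
    have hGform : G a b = (star (ψb a) ⬝ᵥ M.mulVec (ψb b)).re := by
      rw [hGdef]
      simp only []
      rw [hdot a b]
    rw [hGform]
    have hre : (star (ψb a) ⬝ᵥ M.mulVec (ψb b)).re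
        ≤ ∑ i ∈ S a, ∑ j ∈ S b, ‖ψb a i‖ * ‖M i j‖ * ‖ψb b j‖ := by
      have h1 : (star (ψb a) ⬝ᵥ M.mulVec (ψb b)).re ≤ ‖star (ψb a) ⬝ᵥ M.mulVec (ψb b)‖ :=
        Complex.re_le_norm _
      refine h1.trans ?_
      have h2' : ‖star (ψb a) ⬝ᵥ M.mulVec (ψb b)‖
          ≤ ∑ i, ∑ j, ‖ψb a i‖ * ‖M i j‖ * ‖ψb b j‖ := by
        calc ‖star (ψb a) ⬝ᵥ M.mulVec (ψb b)‖
            = ‖∑ i, ∑ j, star (ψb a i) * (M i j * ψb b j)‖ := by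
              simp [dotProduct, Matrix.mulVec, Finset.mul_sum]
          _ ≤ ∑ i, ‖∑ j, star (ψb a i) * (M i j * ψb b j)‖ := norm_sum_le _ _
          _ ≤ ∑ i, ∑ j, ‖star (ψb a i) * (M i j * ψb b j)‖ :=
              Finset.sum_le_sum fun i _ => norm_sum_le _ _
          _ = ∑ i, ∑ j, ‖ψb a i‖ * ‖M i j‖ * ‖ψb b j‖ := by
              refine Finset.sum_congr rfl fun i _ => Finset.sum_congr rfl fun j _ => ?_
              rw [norm_mul, norm_mul, norm_star]; ring
      refine h2'.trans_eq ?_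
      have inner : ∀ i : Fin (2^n), ∑ j, ‖ψb a i‖ * ‖M i j‖ * ‖ψb b j‖
          = ∑ j ∈ S b, ‖ψb a i‖ * ‖M i j‖ * ‖ψb b j‖ :=
        fun i => (Finset.sum_subset (Finset.subset_univ _)
          fun j _ hj => by simp [hsupp b j hj]).symm
      rw [Finset.sum_congr rfl fun i _ => inner i]
      exact (Finset.sum_subset (Finset.subset_univ _)
        fun i _ hi => Finset.sum_eq_zero fun j _ => by simp [hsupp a i hi]).symm
    refine hre.trans ?_
    have hb1 : ∑ i ∈ S a, ∑ j ∈ S b, ‖M i j‖ * ‖ψb a i‖^2 ≤ Fmax := by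
      calc ∑ i ∈ S a, ∑ j ∈ S b, ‖M i j‖ * ‖ψb a i‖^2
          = ∑ i ∈ S a, (∑ j ∈ S b, ‖M i j‖) * ‖ψb a i‖^2 := by
            exact Finset.sum_congr rfl fun i _ => (Finset.sum_mul _ _ _).symm
        _ ≤ ∑ i ∈ S a, Fmax * ‖ψb a i‖^2 :=
            Finset.sum_le_sum fun i hi =>
              mul_le_mul_of_nonneg_right (hmem a b hab i hi) (sq_nonneg _)
        _ = Fmax * ∑ i ∈ S a, ‖ψb a i‖^2 := (Finset.mul_sum _ _ _).symm
        _ = Fmax := by rw [hsum1 a, mul_one]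
    have hb2 : ∑ i ∈ S a, ∑ j ∈ S b, ‖M i j‖ * ‖ψb b j‖^2 ≤ Fmax := by
      rw [Finset.sum_comm]
      calc ∑ j ∈ S b, ∑ i ∈ S a, ‖M i j‖ * ‖ψb b j‖^2
          = ∑ j ∈ S b, (∑ i ∈ S a, ‖M i j‖) * ‖ψb b j‖^2 := by
            exact Finset.sum_congr rfl fun j _ => (Finset.sum_mul _ _ _).symm
        _ ≤ ∑ j ∈ S b, Fmax * ‖ψb b j‖^2 :=
            Finset.sum_le_sum fun j hj =>
              mul_le_mul_of_nonneg_right (hcol j hj) (sq_nonneg _)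
        _ = Fmax * ∑ j ∈ S b, ‖ψb b j‖^2 := (Finset.mul_sum _ _ _).symm
        _ = Fmax := by rw [hsum1 b, mul_one]
    calc ∑ i ∈ S a, ∑ j ∈ S b, ‖ψb a i‖ * ‖M i j‖ * ‖ψb b j‖
        ≤ ∑ i ∈ S a, ∑ j ∈ S b, (‖M i j‖ * ‖ψb a i‖^2 + ‖M i j‖ * ‖ψb b j‖^2) / 2 := by
          refine Finset.sum_le_sum fun i _ => Finset.sum_le_sum fun j _ => ?_
          nlinarith [norm_nonneg (M i j), norm_nonneg (ψb a i), norm_nonneg (ψb b j),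
            sq_nonneg (‖ψb a i‖ - ‖ψb b j‖), norm_nonneg (M i j)]
      _ = ((∑ i ∈ S a, ∑ j ∈ S b, ‖M i j‖ * ‖ψb a i‖^2)
            + ∑ i ∈ S a, ∑ j ∈ S b, ‖M i j‖ * ‖ψb b j‖^2) / 2 := by
          simp only [← Finset.sum_div, Finset.sum_add_distrib]
      _ ≤ (Fmax + Fmax) / 2 := by linarith
      _ = Fmax := by ring
  -- Step D : combine
  have hsum_sq : (∑ b, α b)^2 = ∑ a, ∑ b, α a * α b := by
    rw [sq, Finset.sum_mul_sum]
  have hNle : ∑ a, ∑ b, α a * α b * G a b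
      ≤ (∑ b, (α b)^2) + Fmax * ((∑ b, α b)^2 - ∑ b, (α b)^2) := by
    have e1 : ∀ a : Fin B, ∑ b, α a * α b * G a b
        = α a * α a * G a a + ∑ b ∈ Finset.univ.erase a, α a * α b * G a b :=
      fun a => (Finset.add_sum_erase _ _ (Finset.mem_univ a)).symm
    have e2 : ∑ a, ∑ b ∈ Finset.univ.erase a, α a * α b
        = (∑ b, α b)^2 - ∑ b, (α b)^2 := by
      have e3 : ∀ a : Fin B, ∑ b ∈ Finset.univ.erase a, α a * α b
          = (∑ b, α a * α b) - α a * α a := by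
        intro a
        rw [← Finset.add_sum_erase _ _ (Finset.mem_univ a)]
        ring
      rw [Finset.sum_congr rfl fun a _ => e3 a, Finset.sum_sub_distrib, hsum_sq]
      congr 1
      exact Finset.sum_congr rfl fun a _ => (sq (α a)).symm ▸ (sq (α a))
    calc ∑ a, ∑ b, α a * α b * G a b
        = ∑ a, (α a * α a * G a a + ∑ b ∈ Finset.univ.erase a, α a * α b * G a b) :=
          Finset.sum_congr rfl fun a _ => e1 a
      _ ≤ ∑ a, (α a * α a + (∑ b ∈ Finset.univ.erase a, α a * α b) * Fmax) := by
          refine Finset.sum_le_sum fun a _ => ?_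
          rw [hdiag a, mul_one]
          refine add_le_add le_rfl ?_
          rw [Finset.sum_mul]
          refine Finset.sum_le_sum fun b hb => ?_
          exact mul_le_mul_of_nonneg_left
            (hcross a b (Finset.ne_of_mem_erase hb).symm)
            (mul_nonneg (hα a) (hα b))
      _ = (∑ a, α a * α a) + (∑ a, ∑ b ∈ Finset.univ.erase a, α a * α b) * Fmax := by
          rw [Finset.sum_add_distrib, ← Finset.sum_mul]
      _ = (∑ b, (α b)^2) + Fmax * ((∑ b, α b)^2 - ∑ b, (α b)^2) := by
          rw [e2]
          congr 1
          · exact Finset.sum_congr rfl fun a _ => (sq (α a)).symm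
          · ring
  -- final algebra
  rw [div_le_iff₀ h2]
  have hexp : (((∑ b, (α b)^2) / (∑ b, α b)^2) * (1 - Fmax) + Fmax) * (∑ b, α b)^2
      = (∑ b, (α b)^2) * (1 - Fmax) + Fmax * (∑ b, α b)^2 := by
    field_simp
  rw [hexp, hA]
  nlinarith [hNle]
end

section
/- For K ≤ (1−ε)2^n, the probability that a Haar-random n-qubit state admits a (1−ε)-fidelity approximation by a K-sparse state on a fixed support S is at most exp(−c·2^n·(ε − (2^n − K)/2^n)²) for a universal constant c > 0. -/
open Real Finset

/-- Scalar inequality: `-log x ≥ (1-x) + (1-x)^2/2` for `0 < x ≤ 1`. -/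
lemma neg_log_ge (x : ℝ) (hx : 0 < x) (hx1 : x ≤ 1) :
    (1 - x) + (1 - x)^2 / 2 ≤ -Real.log x := by
  have h0 : (0:ℝ) ∉ Set.uIcc x 1 := by
    rw [Set.uIcc_of_le hx1]; intro h; exact absurd (Set.mem_Icc.1 h).1 (by linarith)
  have hinv : ∫ t in x..(1:ℝ), t⁻¹ = -Real.log x := by
    rw [integral_inv h0]; simp [Real.log_div one_ne_zero (ne_of_gt hx)]
  have hpoly : ∫ t in x..(1:ℝ), (2 - t) = (1 - x) + (1 - x)^2 / 2 := by
    have : ∫ t in x..(1:ℝ), (2 - t) = (∫ t in x..(1:ℝ), (2:ℝ)) - ∫ t in x..(1:ℝ), t := by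
      rw [← intervalIntegral.integral_sub intervalIntegrable_const
        intervalIntegral.intervalIntegrable_id]
    rw [this, intervalIntegral.integral_const, integral_id]
    simp [smul_eq_mul]; ring
  rw [← hinv, ← hpoly]
  apply intervalIntegral.integral_mono_on hx1
  · exact (intervalIntegrable_const.sub intervalIntegral.intervalIntegrable_id)
  · apply ContinuousOn.intervalIntegrable_of_Icc hx1
    exact ContinuousOn.inv₀ continuousOn_id fun t ht => ne_of_gt (lt_of_lt_of_le hx ht.1)
  · intro t ht
    rcases ht with ⟨ht1, ht2⟩
    have htpos : 0 < t := lt_of_lt_of_le hx ht1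
    rw [show t⁻¹ = 1/t by ring, le_div_iff₀ htpos]
    nlinarith [sq_nonneg (1 - t)]

/-- `Fb m a x = ∑_{j=a}^{m} C(m,j) x^j (1-x)^{m-j}`, the binomial tail function. -/
noncomputable def Fb (m a : ℕ) (x : ℝ) : ℝ :=
  ∑ j ∈ Finset.Ico a (m+1), (m.choose j : ℝ) * x^j * (1-x)^(m-j)

lemma hasDerivAt_Fb (m a : ℕ) (ham : a ≤ m) (x : ℝ) :
    HasDerivAt (Fb m a)
      ((a * m.choose a : ℝ) * x^(a-1) * (1-x)^(m-a)) x := by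
  set u : ℕ → ℝ := fun j => (j * m.choose j : ℝ) * x^(j-1) * (1-x)^(m-j) with hu
  have hterm : ∀ j ∈ Finset.Ico a (m+1),
      HasDerivAt (fun y : ℝ => (m.choose j : ℝ) * y^j * (1-y)^(m-j))
        (((j * m.choose j : ℝ) * x^(j-1) * (1-x)^(m-j))
          - ((m.choose j : ℝ) * (m-j : ℕ) * x^j * (1-x)^(m-j-1))) x := by
    intro j hj
    rw [Finset.mem_Ico] at hj
    have h1 : HasDerivAt (fun y : ℝ => y^j) ((j:ℝ) * x^(j-1)) x := hasDerivAt_pow j x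
    have h2 : HasDerivAt (fun y : ℝ => (1-y)^(m-j)) (-(((m-j:ℕ):ℝ) * (1-x)^(m-j-1))) x := by
      have := (hasDerivAt_pow (m-j) (1-x)).comp x ((hasDerivAt_id x).const_sub 1)
      simp at this; exact this
    have := ((h1.const_mul (m.choose j : ℝ)).mul h2)
    refine this.congr_deriv (Eq.symm ?_)
    ring
  have hsum := HasDerivAt.fun_sum hterm
  refine hsum.congr_deriv (Eq.symm ?_)
  have hrw : ∀ j ∈ Finset.Ico a (m+1),
      (((j * m.choose j : ℝ) * x^(j-1) * (1-x)^(m-j))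
        - ((m.choose j : ℝ) * (m-j : ℕ) * x^j * (1-x)^(m-j-1))) = u j - u (j+1) := by
    intro j hj
    rw [Finset.mem_Ico] at hj
    have hch : ((m.choose (j+1) * (j+1) : ℕ) : ℝ) = ((m.choose j * (m - j) : ℕ) : ℝ) := by
      exact_mod_cast congrArg (Nat.cast (R := ℝ)) (Nat.choose_succ_right_eq m j)
    push_cast at hch
    simp only [hu]
    have h1 : (j+1) - 1 = j := rfl
    have h2 : m - (j+1) = m - j - 1 := by omega
    rw [h1, h2]
    push_cast
    linear_combination (x ^ j * (1 - x) ^ (m - j - 1)) * hch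
  rw [Finset.sum_congr rfl hrw, Finset.sum_Ico_eq_sum_range]
  have htel := Finset.sum_range_sub' (fun i => u (a+i)) (m+1-a)
  simp only [add_zero] at htel
  have hre : ∀ i ∈ Finset.range (m + 1 - a), u (a+i) - u (a+i+1) = u (a+i) - u (a+(i+1)) := by
    intro i _; rw [add_assoc]
  rw [Finset.sum_congr rfl hre, htel]
  have hm1 : u (a + (m+1-a)) = 0 := by
    have : a + (m+1-a) = m+1 := by omega
    rw [this]
    simp [hu, Nat.choose_succ_self]
  rw [hm1]
  simp only [hu, sub_zero]

lemma Fb_zero (m a : ℕ) (ha : 1 ≤ a) : Fb m a 0 = 0 := by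
  unfold Fb
  apply Finset.sum_eq_zero
  intro j hj
  rw [Finset.mem_Ico] at hj
  rw [zero_pow (by omega : j ≠ 0)]
  ring

lemma Fb_one (m a : ℕ) (ham : a ≤ m) : Fb m a 1 = 1 := by
  unfold Fb
  rw [Finset.sum_eq_single m]
  · simp
  · intro j hj hne
    rw [Finset.mem_Ico] at hj
    rw [show (1:ℝ) - 1 = 0 by ring, zero_pow (by omega : m - j ≠ 0)]
    ring
  · intro h
    exact absurd (Finset.mem_Ico.2 ⟨ham, by omega⟩) h

lemma choose_cast_pos (m a : ℕ) (ha : 1 ≤ a) (ham : a ≤ m) :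
    (0:ℝ) < (a * m.choose a : ℝ) := by
  have h1 : 0 < m.choose a := Nat.choose_pos ham
  positivity

lemma integral_Fb (m a : ℕ) (ha : 1 ≤ a) (ham : a ≤ m) (x : ℝ) :
    ∫ t in (0:ℝ)..x, (t^(a-1) * (1-t)^(m-a)) = Fb m a x / (a * m.choose a : ℝ) := by
  have hC := choose_cast_pos m a ha ham
  have hcont : Continuous (fun t : ℝ => (a * m.choose a : ℝ) * (t^(a-1) * (1-t)^(m-a))) := by
    continuity
  have hftc : ∫ t in (0:ℝ)..x, ((a * m.choose a : ℝ) * (t^(a-1) * (1-t)^(m-a)))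
      = Fb m a x - Fb m a 0 := by
    apply intervalIntegral.integral_eq_sub_of_hasDerivAt
    · intro t _
      have := hasDerivAt_Fb m a ham t
      refine this.congr_deriv (Eq.symm ?_)
      ring
    · exact hcont.intervalIntegrable 0 x
  rw [intervalIntegral.integral_const_mul] at hftc
  rw [Fb_zero m a ha, sub_zero] at hftc
  rw [eq_div_iff hC.ne']
  linarith [hftc]

/-- The regularized incomplete beta function
`I(x; a, b) = (∫₀^x t^(a−1)(1−t)^(b−1) dt) / (∫₀^1 t^(a−1)(1−t)^(b−1) dt)`. -/
noncomputable def regIncBeta (x a b : ℝ) : ℝ :=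
  (∫ t in (0:ℝ)..x, t^(a - 1) * (1 - t)^(b - 1)) /
    (∫ t in (0:ℝ)..(1:ℝ), t^(a - 1) * (1 - t)^(b - 1))

lemma regIncBeta_eq_Fb (N K : ℕ) (hK : 1 ≤ K) (hKN : K < N) (ε : ℝ) :
    regIncBeta ε ((N:ℝ) - K) K = Fb (N-1) (N-K) ε := by
  set m := N - 1
  set a := N - K
  have ha : 1 ≤ a := by omega
  have ham : a ≤ m := by omega
  have hma : m - a = K - 1 := by omega
  have he1 : ((N:ℝ) - K) - 1 = ((a - 1 : ℕ) : ℝ) := by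
    push_cast [Nat.cast_sub (by omega : K ≤ N), Nat.cast_sub (by omega : 1 ≤ a)]
    have hA : (a:ℝ) = N - K := Nat.cast_sub (by omega : K ≤ N)
    rw [hA]
  have he2 : ((K:ℝ)) - 1 = ((m - a : ℕ) : ℝ) := by
    rw [hma]
    push_cast [Nat.cast_sub (by omega : 1 ≤ K)]
    ring
  unfold regIncBeta
  rw [he1, he2]
  simp only [Real.rpow_natCast]
  rw [integral_Fb m a ha ham ε, integral_Fb m a ha ham 1, Fb_one m a ham]
  have hC := choose_cast_pos m a ha ham
  field_simp
  exact mul_div_cancel_right₀ _ (Nat.cast_ne_zero.2 (Nat.choose_pos ham).ne')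

lemma Fb_le_exp (m a : ℕ) (ha : 1 ≤ a) (ham : a ≤ m) (ε : ℝ)
    (hε : 0 < ε) (hεp : ε ≤ (a:ℝ)/m) :
    Fb m a ε ≤ Real.exp (-(m:ℝ) * ((a:ℝ)/m - ε)^2 / 2) := by
  have hm : 0 < m := by omega
  have hmR : (0:ℝ) < m := by exact_mod_cast hm
  set p : ℝ := (a:ℝ)/m with hp
  have hppos : 0 < p := by positivity
  have hp1 : p ≤ 1 := by
    rw [hp, div_le_one hmR]; exact_mod_cast ham
  have hε1 : ε ≤ 1 := hεp.trans hp1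
  set lam : ℝ := p / ε with hlam
  have hlam1 : 1 ≤ lam := by
    rw [hlam, le_div_iff₀ hε]; linarith
  have hlampos : 0 < lam := by positivity
  have step1 : lam^a * Fb m a ε ≤ (ε*lam + (1-ε))^m := by
    have hsum : (ε*lam + (1-ε))^m
        = ∑ j ∈ Finset.range (m+1), (m.choose j : ℝ) * (ε*lam)^j * (1-ε)^(m-j) := by
      rw [add_pow]
      exact Finset.sum_congr rfl fun j _ => by ring
    rw [hsum, Fb, Finset.mul_sum]
    apply le_trans (Finset.sum_le_sum ?_) (Finset.sum_le_sum_of_subset_of_nonneg ?_ ?_)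
    · intro j hj
      rw [Finset.mem_Ico] at hj
      have h1 : lam^a ≤ lam^j := pow_le_pow_right₀ hlam1 hj.1
      have h1e : (0:ℝ) ≤ 1 - ε := by linarith
      have h2 : (0:ℝ) ≤ (m.choose j : ℝ) * ε^j * (1-ε)^(m-j) :=
        mul_nonneg (mul_nonneg (by positivity) (by positivity)) (pow_nonneg h1e _)
      calc lam^a * ((m.choose j : ℝ) * ε^j * (1-ε)^(m-j))
          ≤ lam^j * ((m.choose j : ℝ) * ε^j * (1-ε)^(m-j)) := by
            apply mul_le_mul_of_nonneg_right h1 h2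
        _ = (m.choose j : ℝ) * (ε*lam)^j * (1-ε)^(m-j) := by rw [mul_pow]; ring
    · intro j hj; rw [Finset.mem_Ico] at hj; exact Finset.mem_range.2 hj.2
    · intro j _ _
      have h1e : (0:ℝ) ≤ 1 - ε := by linarith
      have h2e : (0:ℝ) ≤ ε * lam := by positivity
      exact mul_nonneg (mul_nonneg (by positivity) (pow_nonneg h2e _)) (pow_nonneg h1e _)
  have step2 : (ε*lam + (1-ε))^m ≤ Real.exp ((m:ℝ) * (p - ε)) := by
    have hbase : ε*lam + (1-ε) = 1 + (p - ε) := by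
      rw [hlam]; field_simp; ring
    rw [hbase]
    calc (1 + (p - ε))^m ≤ (Real.exp (p - ε))^m := by
          apply pow_le_pow_left₀ (by linarith) (by linarith [Real.add_one_le_exp (p - ε)])
      _ = Real.exp ((m:ℝ) * (p - ε)) := by
          rw [← Real.exp_nat_mul]
  have step3 : lam^a = Real.exp ((a:ℝ) * Real.log lam) := by
    rw [← Real.exp_log hlampos, ← Real.exp_nat_mul, Real.exp_log hlampos]
  have haR : (a:ℝ) = m * p := by rw [hp]; field_simp
  have hlog : (p - ε) + (p - ε)^2/2 ≤ p * Real.log lam := by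
    have hx := neg_log_ge (ε/p) (by positivity) (by rw [div_le_one hppos]; exact hεp)
    have hlog2 : Real.log (ε/p) = - Real.log lam := by
      rw [hlam, ← Real.log_inv]
      congr 1
      field_simp
    rw [hlog2, neg_neg] at hx
    have h1 : 1 - ε/p = (p - ε)/p := by field_simp
    rw [h1] at hx
    have hple : (p-ε)^2/p ≥ (p-ε)^2 := by
      rw [ge_iff_le, le_div_iff₀ hppos]
      nlinarith [sq_nonneg (p-ε)]
    have := mul_le_mul_of_nonneg_left hx (le_of_lt hppos)
    calc (p - ε) + (p - ε)^2/2 ≤ p * ((p-ε)/p + ((p-ε)/p)^2/2) := by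
          rw [div_pow]
          have e1 : p * ((p-ε)/p + (p-ε)^2/p^2/2) = (p-ε) + (p-ε)^2/p/2 := by
            field_simp
          rw [e1]
          linarith [hple]
      _ ≤ p * Real.log lam := this
  have hfinal : Fb m a ε ≤ Real.exp ((m:ℝ)*(p-ε) - (a:ℝ) * Real.log lam) := by
    have h := step1.trans step2
    rw [Real.exp_sub, ← step3, le_div_iff₀ (by positivity : (0:ℝ) < lam^a), mul_comm]
    exact h
  apply hfinal.trans
  apply Real.exp_le_exp.2
  rw [haR]
  nlinarith [hlog, hmR.le, sq_nonneg (p - ε)]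

/-- **Exponential bound on the sparse-approximation volume.** There is a universal
constant `c > 0` such that for all `n`, `K` and `ε ∈ [0,1]` with `K ≤ (1−ε)2^n`,
the probability `I(ε; 2^n − K, K)` that a Haar-random `n`-qubit state admits a
`(1−ε)`-fidelity approximation by a `K`-sparse state on a fixed support is at most
`exp(−c · 2^n · (ε − (2^n − K)/2^n)²)`. -/
theorem sparse_volume_exponential_bound :
    ∃ c : ℝ, 0 < c ∧ ∀ n K : ℕ, ∀ ε : ℝ, 0 < K → 0 ≤ ε → ε ≤ 1 →
      (K : ℝ) ≤ (1 - ε) * 2^n →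
      regIncBeta ε ((2^n : ℝ) - K) K ≤
        Real.exp (-c * 2^n * (ε - ((2^n : ℝ) - K) / 2^n)^2) := by
  refine ⟨1/4, by norm_num, ?_⟩
  intro n K ε hK hε0 hε1 hKε
  rcases eq_or_lt_of_le hε0 with hε | hεpos
  · -- ε = 0 : the integral from 0 to 0 vanishes
    rw [← hε]
    unfold regIncBeta
    rw [intervalIntegral.integral_same, zero_div]
    exact (Real.exp_pos _).le
  · set N : ℕ := 2^n with hN
    have hcast : ((N:ℕ):ℝ) = (2:ℝ)^n := by rw [hN]; push_cast; ring
    have hNpos : 0 < N := Nat.pow_pos (by norm_num)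
    have hNR : (0:ℝ) < (N:ℝ) := by exact_mod_cast hNpos
    have hKN : K < N := by
      by_contra h
      push_neg at h
      have h1 : (N:ℝ) ≤ (K:ℝ) := by exact_mod_cast h
      rw [← hcast] at hKε
      nlinarith [hKε, hNR, hεpos]
    rw [← hcast]
    rw [regIncBeta_eq_Fb N K hK hKN ε]
    set m := N - 1 with hm
    set a := N - K with ha'
    have ha : 1 ≤ a := by omega
    have ham : a ≤ m := by omega
    have hN2 : 2 ≤ N := by omega
    have hmpos : 0 < m := by omega
    have hmR : (0:ℝ) < (m:ℝ) := by exact_mod_cast hmpos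
    have haN : (a:ℝ) = (N:ℝ) - K := by
      rw [ha']; push_cast [Nat.cast_sub (by omega : K ≤ N)]; ring
    have hmN : (m:ℝ) = (N:ℝ) - 1 := by
      rw [hm]; push_cast [Nat.cast_sub (by omega : 1 ≤ N)]; ring
    have hεa : ε ≤ (a:ℝ)/(N:ℝ) := by
      rw [haN, le_div_iff₀ hNR]
      rw [← hcast] at hKε
      nlinarith [hKε]
    have hεm : ε ≤ (a:ℝ)/(m:ℝ) := by
      apply hεa.trans
      apply div_le_div_of_nonneg_left (by positivity) hmR
      rw [hmN]; linarith
    have hbound := Fb_le_exp m a ha ham ε hεpos hεm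
    apply hbound.trans
    apply Real.exp_le_exp.2
    -- -(m) * (a/m - ε)^2 / 2 ≥ ...? need:  N δ² /4 ≤ m δ'² /2
    have hδ : (0:ℝ) ≤ (a:ℝ)/(N:ℝ) - ε := by linarith
    have hδ' : (a:ℝ)/(N:ℝ) - ε ≤ (a:ℝ)/(m:ℝ) - ε := by
      have : (a:ℝ)/(N:ℝ) ≤ (a:ℝ)/(m:ℝ) := by
        apply div_le_div_of_nonneg_left (by positivity) hmR
        rw [hmN]; linarith
      linarith
    have hsq : ((a:ℝ)/(N:ℝ) - ε)^2 ≤ ((a:ℝ)/(m:ℝ) - ε)^2 :=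
      pow_le_pow_left₀ hδ hδ' 2
    have hm2 : (N:ℝ)/2 ≤ (m:ℝ) := by
      rw [hmN]
      have : (2:ℝ) ≤ (N:ℝ) := by exact_mod_cast hN2
      linarith
    have hrw : (ε - ((N:ℝ) - K)/(N:ℝ))^2 = ((a:ℝ)/(N:ℝ) - ε)^2 := by
      rw [haN]; ring
    rw [hrw]
    have hmul := mul_le_mul hm2 hsq (sq_nonneg _) hmR.le
    nlinarith [hmul]
end
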